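/- arXiv:2503.05245 — 2 statements merged into one kernel-verified Lean document; each statement's English description precedes it below -/
import Mathlib

section
/- Let (Ω, μ) be a probability space, let 𝒮, 𝒳, ℱ be finite types (with discrete σ-algebras), let S : Ω → 𝒮 and X : Ω → 𝒳 be measurable, and let g : 𝒳 → ℱ. If the mutual information I(S;X) is finite and I(S;X) = I(S; g∘X), then S and X are conditionally independent given the σ-algebra generated by g∘X. (Equality in the data processing inequality implies that g(X) is a sufficient statistic for S with respect to X.) -/
/-!
Let `p` be the joint law of `(S, X)` and let `m (s, x) = p (s, g x) p x / p (g x)` be the law with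
the same laws of `(S, g X)` and of `X` under which `S → g X → X` is a Markov chain. Regrouping the
sum defining `I(S; g X)` along the fibres of `g` gives `I(S; X) - I(S; g X) = D(p ‖ m)`, so equality
forces `p = m` by the equality case of Gibbs' inequality. On an atom `{g X = f}` of positive mass,
`p = m` says precisely that `S` and `X` are independent under the conditional measure, and for a
discrete conditioning variable the conditional law of `(S, X)` given `σ(g X)` is almost surely that
conditional measure.
-/

open MeasureTheory ProbabilityTheory
open scoped ENNReal Classical

/-- Kullback–Leibler divergence of `μ` from `ν`, valued in the extended nonnegative reals. -/
noncomputable def klDiv {α : Type*} [MeasurableSpace α] (μ ν : Measure α) : ℝ≥0∞ :=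
  if μ ≪ ν ∧ Integrable (MeasureTheory.llr μ ν) μ then
    ENNReal.ofReal (∫ x, MeasureTheory.llr μ ν x ∂μ) else ⊤

/-- Mutual information `I(U;V)`: KL divergence of the joint law from the product of the
marginal laws. -/
noncomputable def mutualInfo {Ω α β : Type*} [MeasurableSpace Ω] [MeasurableSpace α]
    [MeasurableSpace β] (μ : Measure Ω) (U : Ω → α) (V : Ω → β) : ℝ≥0∞ :=
  klDiv (μ.map fun ω => (U ω, V ω)) ((μ.map U).prod (μ.map V))

/-- `S` and `X` are conditionally independent given the σ-algebra `m`: for all measurable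
sets `A`, `B`, `E[1_{S∈A} · 1_{X∈B} | m] = E[1_{S∈A} | m] · E[1_{X∈B} | m]` a.s. -/
def CondIndepGiven {Ω 𝒮 𝒳 : Type*} [MeasurableSpace Ω] [MeasurableSpace 𝒮]
    [MeasurableSpace 𝒳] (μ : Measure Ω) (m : MeasurableSpace Ω)
    (S : Ω → 𝒮) (X : Ω → 𝒳) : Prop :=
  ∀ (A : Set 𝒮) (B : Set 𝒳), MeasurableSet A → MeasurableSet B →
    μ[fun ω => A.indicator (fun _ => (1 : ℝ)) (S ω) * B.indicator (fun _ => (1 : ℝ)) (X ω) | m]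
      =ᵐ[μ] fun ω =>
        (μ[fun ω' => A.indicator (fun _ => (1 : ℝ)) (S ω') | m]) ω *
        (μ[fun ω' => B.indicator (fun _ => (1 : ℝ)) (X ω') | m]) ω

open Real
open InformationTheory (klFun klFun_apply klFun_nonneg klFun_eq_zero_iff
  integral_llr_add_sub_measure_univ_nonneg)

lemma measureReal_singleton_le_map {α β : Type*} [MeasurableSpace α] [MeasurableSpace β]
    [MeasurableSingletonClass β] (P : Measure α) [IsFiniteMeasure P] {h : α → β}
    (hh : Measurable h) (a : α) : P.real {a} ≤ (P.map h).real {h a} := by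
  rw [map_measureReal_apply hh (measurableSet_singleton _)]
  exact measureReal_mono fun x hx => by simp_all

lemma measureReal_prod_singleton {α β : Type*} [MeasurableSpace α] [MeasurableSpace β]
    (μ : Measure α) (ν : Measure β) [SFinite ν] (a : α) (b : β) :
    (μ.prod ν).real {(a, b)} = μ.real {a} * ν.real {b} := by
  rw [← Set.singleton_prod_singleton, measureReal_prod_prod]

lemma measureReal_snd_singleton {α γ : Type*} [Fintype α] [MeasurableSpace α]
    [MeasurableSingletonClass α] [MeasurableSpace γ] [MeasurableSingletonClass γ]
    (ρ : Measure (α × γ)) [IsFiniteMeasure ρ] (c : γ) :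
    ρ.snd.real {c} = ∑ a, ρ.real {(a, c)} := by
  rw [Measure.snd, map_measureReal_apply measurable_snd (measurableSet_singleton c),
    ← Set.univ_prod, ← Finset.coe_univ, ← Finset.coe_singleton, ← Finset.coe_product,
    ← sum_measureReal_singleton, Finset.sum_product]
  simp only [Finset.sum_singleton]

lemma eq_of_sum_mul_log_div_eq_zero {ι : Type*} [Fintype ι] {p q : ι → ℝ}
    (hp : ∀ i, 0 ≤ p i) (hq : ∀ i, 0 ≤ q i) (hpq : ∀ i, 0 < p i → 0 < q i)
    (hsum : ∑ i, q i = ∑ i, p i) (h : ∑ i, p i * log (p i / q i) = 0) : p = q := by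
  have hsupp : ∀ i, q i = 0 → p i = 0 := fun i hqi =>
    (hp i).eq_or_lt.elim Eq.symm fun hpi => absurd hqi (hpq i hpi).ne'
  have hterm (i) : q i * klFun (p i / q i) = p i * log (p i / q i) + q i - p i := by
    rcases eq_or_ne (q i) 0 with hqi | hqi
    · simp [hqi, hsupp i hqi]
    · rw [klFun_apply]
      field_simp
  have hzero : ∑ i, q i * klFun (p i / q i) = 0 := by
    simp only [hterm, Finset.sum_sub_distrib, Finset.sum_add_distrib, h, hsum, zero_add, sub_self]
  funext i
  have hi := (Finset.sum_eq_zero_iff_of_nonneg fun j _ => mul_nonneg (hq j)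
    (klFun_nonneg (div_nonneg (hp j) (hq j)))).1 hzero i (Finset.mem_univ i)
  rcases mul_eq_zero.1 hi with hqi | hkl
  · rw [hqi, hsupp i hqi]
  · exact eq_of_div_eq_one ((klFun_eq_zero_iff (div_nonneg (hp i) (hq i))).1 hkl)

section Finite

variable {α β : Type*} [Fintype α] [MeasurableSpace α] [MeasurableSingletonClass α]
  [Fintype β] [MeasurableSpace β] [MeasurableSingletonClass β]

lemma toReal_klDiv_eq_sum {μ ν : Measure α} [IsProbabilityMeasure μ] [IsProbabilityMeasure ν]
    (h : klDiv μ ν ≠ ⊤) :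
    (klDiv μ ν).toReal = ∑ a, μ.real {a} * log (μ.real {a} / ν.real {a}) := by
  obtain ⟨hac, hint⟩ : μ ≪ ν ∧ Integrable (llr μ ν) μ := by
    by_contra hc
    exact h (by rw [klDiv, if_neg hc])
  rw [klDiv, if_pos ⟨hac, hint⟩]
  have hnonneg := integral_llr_add_sub_measure_univ_nonneg hac hint
  simp only [probReal_univ, add_sub_cancel_right] at hnonneg
  rw [ENNReal.toReal_ofReal hnonneg, integral_fintype hint]
  refine Finset.sum_congr rfl fun a _ => ?_
  rcases eq_or_ne (μ.real {a}) 0 with h0 | h0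
  · simp [h0]
  have hrn : (μ.rnDeriv ν a).toReal * ν.real {a} = μ.real {a} := by
    have := Measure.setLIntegral_rnDeriv hac {a}
    rw [lintegral_singleton] at this
    rw [measureReal_def, measureReal_def, ← ENNReal.toReal_mul, this]
  have hν : ν.real {a} ≠ 0 := fun hν => h0 (by rw [← hrn, hν, mul_zero])
  rw [smul_eq_mul, llr, eq_div_of_mul_eq hν hrn]

lemma sum_map_measureReal_singleton_mul (P : Measure α) [IsFiniteMeasure P] (h : α → β)
    (F : β → ℝ) : ∑ b, (P.map h).real {b} * F b = ∑ a, P.real {a} * F (h a) := by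
  have := integral_map (μ := P) (measurable_of_countable h).aemeasurable
    (measurable_of_countable F).aestronglyMeasurable
  simpa only [integral_fintype Integrable.of_finite, smul_eq_mul] using this

end Finite

section MarkovChain

variable {α β γ : Type*} [Fintype α] [MeasurableSpace α] [MeasurableSingletonClass α]
  [Fintype β] [MeasurableSpace β] [MeasurableSingletonClass β]
  [MeasurableSpace γ] [MeasurableSingletonClass γ]
  (P : Measure (α × β)) [IsProbabilityMeasure P] (g : β → γ)

/-- Mass function of the law of `(A, B)` under which `A → g B → B` is a Markov chain and which has
the same laws of `(A, g B)` and of `B` as `P`. -/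
noncomputable def markovChainMass (x : α × β) : ℝ :=
  (P.map (Prod.map id g)).real {(x.1, g x.2)} * P.snd.real {x.2} / (P.snd.map g).real {g x.2}

lemma sum_markovChainMass : ∑ x, markovChainMass P g x = 1 := by
  have hmarg : ∀ c, ∑ a, (P.map (Prod.map id g)).real {(a, c)} = (P.snd.map g).real {c} := by
    intro c
    rw [← measureReal_snd_singleton, Measure.snd, Measure.snd,
      Measure.map_map measurable_snd (measurable_of_countable _),
      Measure.map_map (measurable_of_countable g) measurable_snd]
    rfl
  calc ∑ x, markovChainMass P g x
      = ∑ b, (∑ a, (P.map (Prod.map id g)).real {(a, g b)}) * P.snd.real {b}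
          / (P.snd.map g).real {g b} := by
        rw [Fintype.sum_prod_type_right]
        simp only [markovChainMass, ← Finset.sum_div, ← Finset.sum_mul]
    _ = ∑ b, P.snd.real {b} := by
        refine Finset.sum_congr rfl fun b _ => ?_
        rw [hmarg]
        rcases eq_or_ne ((P.snd.map g).real {g b}) 0 with h0 | h0
        · have := measureReal_singleton_le_map P.snd (measurable_of_countable g) b
          rw [h0] at this ⊢
          simp [le_antisymm this measureReal_nonneg]
        · field_simp
    _ = 1 := by rw [sum_measureReal_singleton, Finset.coe_univ, probReal_univ]

lemma markovChainMass_factors_pos {a : α} {b : β} (h : 0 < P.real {(a, b)}) :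
    0 < (P.map (Prod.map id g)).real {(a, g b)} ∧ 0 < P.snd.real {b}
      ∧ 0 < (P.snd.map g).real {g b} := by
  have hB : 0 < P.snd.real {b} := h.trans_le (measureReal_singleton_le_map P measurable_snd _)
  exact ⟨h.trans_le (measureReal_singleton_le_map P (measurable_of_countable _) _), hB,
    hB.trans_le (measureReal_singleton_le_map P.snd (measurable_of_countable g) b)⟩

lemma toReal_klDiv_sub_toReal_klDiv_map [Fintype γ] (h₁ : klDiv P (P.fst.prod P.snd) ≠ ⊤)
    (h₂ : klDiv (P.map (Prod.map id g)) (P.fst.prod (P.snd.map g)) ≠ ⊤) :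
    (klDiv P (P.fst.prod P.snd)).toReal
        - (klDiv (P.map (Prod.map id g)) (P.fst.prod (P.snd.map g))).toReal
      = ∑ x, P.real {x} * log (P.real {x} / markovChainMass P g x) := by
  have : IsProbabilityMeasure (P.map (Prod.map id g)) :=
    Measure.isProbabilityMeasure_map (measurable_of_countable _).aemeasurable
  have : IsProbabilityMeasure (P.snd.map g) :=
    Measure.isProbabilityMeasure_map (measurable_of_countable _).aemeasurable
  rw [toReal_klDiv_eq_sum h₁, toReal_klDiv_eq_sum h₂, sum_map_measureReal_singleton_mul,
    ← Finset.sum_sub_distrib]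
  refine Finset.sum_congr rfl fun ⟨a, b⟩ _ => ?_
  simp only [Prod.map_apply, id_eq, measureReal_prod_singleton, markovChainMass]
  rcases measureReal_nonneg.eq_or_lt with h0 | hpos
  · rw [← h0]
    ring
  have hA : 0 < P.fst.real {a} := hpos.trans_le (measureReal_singleton_le_map P measurable_fst _)
  obtain ⟨hR, hB, hC⟩ := markovChainMass_factors_pos P g hpos
  rw [← mul_sub, ← log_div (by positivity) (by positivity)]
  congr 2
  field_simp

theorem measure_singleton_mul_eq_of_klDiv_eq [Fintype γ] (hfin : klDiv P (P.fst.prod P.snd) ≠ ⊤)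
    (heq : klDiv P (P.fst.prod P.snd)
      = klDiv (P.map (Prod.map id g)) (P.fst.prod (P.snd.map g))) (a : α) (b : β) :
    P {(a, b)} * P.snd.map g {g b} = P.map (Prod.map id g) {(a, g b)} * P.snd {b} := by
  have hP : (fun x => P.real {x}) = markovChainMass P g := by
    refine eq_of_sum_mul_log_div_eq_zero (fun _ => measureReal_nonneg)
      (fun _ => by unfold markovChainMass; positivity) (fun ⟨a, b⟩ hx => ?_) ?_ ?_
    · obtain ⟨hR, hB, hC⟩ := markovChainMass_factors_pos P g hx
      unfold markovChainMass
      positivity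
    · rw [sum_markovChainMass, sum_measureReal_singleton, Finset.coe_univ, probReal_univ]
    · rw [← toReal_klDiv_sub_toReal_klDiv_map P g hfin (heq ▸ hfin), heq, sub_self]
  have hab : P.real {(a, b)} = markovChainMass P g (a, b) := congr_fun hP (a, b)
  rw [← ENNReal.toReal_eq_toReal_iff' (by finiteness) (by finiteness)]
  simp only [ENNReal.toReal_mul, ← measureReal_def]
  rcases eq_or_ne ((P.snd.map g).real {g b}) 0 with hC | hC
  · have hB := measureReal_singleton_le_map P.snd (measurable_of_countable g) b
    rw [hC] at hB ⊢
    rw [le_antisymm hB measureReal_nonneg]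
    ring
  · rw [hab, markovChainMass, div_mul_cancel₀ _ hC]

end MarkovChain

lemma measure_inter_preimage_mul_eq_of_mutualInfo_eq {Ω α β γ : Type*} [MeasurableSpace Ω]
    [Fintype α] [MeasurableSpace α] [MeasurableSingletonClass α]
    [Fintype β] [MeasurableSpace β] [MeasurableSingletonClass β]
    [Fintype γ] [MeasurableSpace γ] [MeasurableSingletonClass γ]
    {μ : Measure Ω} [IsProbabilityMeasure μ] {U : Ω → α} {V : Ω → β}
    (hU : Measurable U) (hV : Measurable V) (g : β → γ) (hfin : mutualInfo μ U V ≠ ⊤)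
    (heq : mutualInfo μ U V = mutualInfo μ U (g ∘ V)) (a : α) (b : β) :
    μ (U ⁻¹' {a} ∩ V ⁻¹' {b}) * μ ((g ∘ V) ⁻¹' {g b})
      = μ (U ⁻¹' {a} ∩ (g ∘ V) ⁻¹' {g b}) * μ (V ⁻¹' {b}) := by
  set P := μ.map fun ω => (U ω, V ω)
  have : IsProbabilityMeasure P := Measure.isProbabilityMeasure_map (hU.prodMk hV).aemeasurable
  have hg : Measurable g := measurable_of_countable g
  have hQ : P.map (Prod.map id g) = μ.map fun ω => (U ω, (g ∘ V) ω) :=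
    Measure.map_map (measurable_of_countable _) (hU.prodMk hV)
  have hPg : P.snd.map g = μ.map (g ∘ V) := by
    rw [Measure.snd_map_prodMk hU, Measure.map_map hg hV]
  have hI : mutualInfo μ U V = klDiv P (P.fst.prod P.snd) := by
    rw [mutualInfo, Measure.fst_map_prodMk hV, Measure.snd_map_prodMk hU]
  have hIg : mutualInfo μ U (g ∘ V) = klDiv (P.map (Prod.map id g)) (P.fst.prod (P.snd.map g)) := by
    rw [mutualInfo, hQ, hPg, Measure.fst_map_prodMk hV]
  have key := measure_singleton_mul_eq_of_klDiv_eq P g (hI ▸ hfin) (hI ▸ hIg ▸ heq) a b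
  rwa [hQ, hPg, Measure.snd_map_prodMk hU, ← Set.singleton_prod_singleton,
    ← Set.singleton_prod_singleton,
    Measure.map_apply (hU.prodMk hV) (.prod (.singleton _) (.singleton _)),
    Measure.map_apply (hU.prodMk (hg.comp hV)) (.prod (.singleton _) (.singleton _)),
    Measure.map_apply (hg.comp hV) (.singleton _), Measure.map_apply hV (.singleton _),
    Set.mk_preimage_prod, Set.mk_preimage_prod] at key

section ConditionalIndependence

variable {Ω β 𝒮 𝒳 : Type*} [MeasurableSpace Ω] [MeasurableSpace β] [MeasurableSpace 𝒮]
  [MeasurableSpace 𝒳] {μ : Measure Ω} {φ : Ω → β} {S : Ω → 𝒮} {X : Ω → 𝒳}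

lemma ae_measure_preimage_singleton_ne_zero [Countable β] [MeasurableSingletonClass β]
    (hφ : Measurable φ) : ∀ᵐ ω ∂μ, μ (φ ⁻¹' {φ ω}) ≠ 0 := by
  have : ∀ᵐ b ∂μ.map φ, μ.map φ {b} ≠ 0 := ae_iff_of_countable.2 fun _ hb => hb
  filter_upwards [ae_of_ae_map hφ.aemeasurable this] with ω hω
  rwa [Measure.map_apply hφ (measurableSet_singleton _)] at hω

lemma condDistrib_eq_map_cond {𝒴 : Type*} [MeasurableSingletonClass β] [MeasurableSpace 𝒴]
    [StandardBorelSpace 𝒴] [Nonempty 𝒴] [IsFiniteMeasure μ] {Y : Ω → 𝒴} (hφ : Measurable φ)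
    (hY : Measurable Y) {b : β} (hb : μ (φ ⁻¹' {b}) ≠ 0) :
    condDistrib Y φ μ b = (μ[|φ ⁻¹' {b}]).map Y := by
  have hb' : μ.map φ {b} ≠ 0 := by rwa [Measure.map_apply hφ (measurableSet_singleton b)]
  ext s hs
  rw [condDistrib_apply_of_ne_zero hY b hb', Measure.map_apply hY hs,
    cond_apply (hφ (measurableSet_singleton b)), Measure.map_apply hφ (measurableSet_singleton b),
    Measure.map_apply (hφ.prodMk hY) ((measurableSet_singleton b).prod hs), Set.mk_preimage_prod]

lemma indepFun_of_measure_inter_preimage_singleton [Countable 𝒮] [MeasurableSingletonClass 𝒮]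
    [Countable 𝒳] [MeasurableSingletonClass 𝒳] [IsFiniteMeasure μ] (hS : Measurable S) (hX : Measurable X)
    (h : ∀ s x, μ (S ⁻¹' {s} ∩ X ⁻¹' {x}) = μ (S ⁻¹' {s}) * μ (X ⁻¹' {x})) :
    IndepFun S X μ := by
  rw [indepFun_iff_map_prod_eq_prod_map_map hS.aemeasurable hX.aemeasurable]
  refine Measure.ext_of_singleton fun ⟨s, x⟩ => ?_
  rw [← Set.singleton_prod_singleton, Measure.prod_prod,
    Measure.map_apply (hS.prodMk hX) ((measurableSet_singleton s).prod (measurableSet_singleton x)),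
    Measure.map_apply hS (measurableSet_singleton s),
    Measure.map_apply hX (measurableSet_singleton x),
    Set.mk_preimage_prod, h]

lemma condIndepGiven_comap_of_condDistrib_eq_prod [StandardBorelSpace 𝒮] [Nonempty 𝒮]
    [StandardBorelSpace 𝒳] [Nonempty 𝒳] [IsFiniteMeasure μ] (hφ : Measurable φ) (hS : Measurable S) (hX : Measurable X)
    (h : ∀ᵐ ω ∂μ, condDistrib (fun ω => (S ω, X ω)) φ μ (φ ω)
      = (condDistrib (fun ω => (S ω, X ω)) φ μ (φ ω)).fst.prod
          (condDistrib (fun ω => (S ω, X ω)) φ μ (φ ω)).snd) :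
    CondIndepGiven μ (MeasurableSpace.comap φ inferInstance) S X := by
  intro A B hA hB
  have hY := hS.prodMk hX
  have hAB := condDistrib_ae_eq_condExp (μ := μ) hφ hY (hA.prod hB)
  have hA' := condDistrib_ae_eq_condExp (μ := μ) hφ hY (measurable_fst hA)
  have hB' := condDistrib_ae_eq_condExp (μ := μ) hφ hY (measurable_snd hB)
  have hinter : (S ⁻¹' A ∩ X ⁻¹' B).indicator (fun _ => (1 : ℝ))
      = fun ω => A.indicator (fun _ => (1 : ℝ)) (S ω) * B.indicator (fun _ => 1) (X ω) :=
    Set.inter_indicator_one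
  rw [Set.mk_preimage_prod, hinter] at hAB
  filter_upwards [h, hAB, hA', hB'] with ω hω hωAB hωA hωB
  set κ := condDistrib (fun ω => (S ω, X ω)) φ μ (φ ω)
  calc _ = κ.real (A ×ˢ B) := hωAB.symm
    _ = κ.fst.real A * κ.snd.real B := by
      conv_lhs => rw [hω]
      exact measureReal_prod_prod A B
    _ = _ := by
      simp only [measureReal_def, Measure.fst_apply hA, Measure.snd_apply hB] at hωA hωB ⊢
      exact congrArg₂ (· * ·) hωA hωB

lemma condIndepGiven_comap_of_indepFun_cond [Countable β] [MeasurableSingletonClass β]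
    [StandardBorelSpace 𝒮] [Nonempty 𝒮] [StandardBorelSpace 𝒳] [Nonempty 𝒳] [IsFiniteMeasure μ]
    (hφ : Measurable φ) (hS : Measurable S) (hX : Measurable X)
    (h : ∀ b, μ (φ ⁻¹' {b}) ≠ 0 → IndepFun S X μ[|φ ⁻¹' {b}]) :
    CondIndepGiven μ (MeasurableSpace.comap φ inferInstance) S X := by
  refine condIndepGiven_comap_of_condDistrib_eq_prod hφ hS hX ?_
  filter_upwards [ae_measure_preimage_singleton_ne_zero hφ] with ω hω
  have := cond_isProbabilityMeasure hω
  rw [condDistrib_eq_map_cond hφ (hS.prodMk hX) hω, Measure.fst_map_prodMk hX,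
    Measure.snd_map_prodMk hS]
  exact (indepFun_iff_map_prod_eq_prod_map_map hS.aemeasurable hX.aemeasurable).1 (h _ hω)

lemma indepFun_cond_preimage_of_measure_mul_eq [Countable 𝒮] [MeasurableSingletonClass 𝒮]
    [Countable 𝒳] [MeasurableSingletonClass 𝒳] [MeasurableSingletonClass β] [IsFiniteMeasure μ]
    {g : 𝒳 → β} (hS : Measurable S) (hX : Measurable X) (hg : Measurable g)
    (h : ∀ s x, μ (S ⁻¹' {s} ∩ X ⁻¹' {x}) * μ ((g ∘ X) ⁻¹' {g x})
      = μ (S ⁻¹' {s} ∩ (g ∘ X) ⁻¹' {g x}) * μ (X ⁻¹' {x}))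
    {f : β} (hf : μ ((g ∘ X) ⁻¹' {f}) ≠ 0) :
    IndepFun S X μ[|(g ∘ X) ⁻¹' {f}] := by
  refine indepFun_of_measure_inter_preimage_singleton hS hX fun s x => ?_
  simp only [cond_apply ((hg.comp hX) (measurableSet_singleton f))]
  rw [Set.inter_left_comm]
  by_cases hx : g x = f
  · subst hx
    have hsub : X ⁻¹' {x} ⊆ (g ∘ X) ⁻¹' {g x} := fun ω hω => by simp_all
    rw [Set.inter_eq_right.2 hsub, Set.inter_comm ((g ∘ X) ⁻¹' {g x})]
    set c := μ ((g ∘ X) ⁻¹' {g x})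
    calc c⁻¹ * μ (S ⁻¹' {s} ∩ X ⁻¹' {x})
        = c⁻¹ * (μ (S ⁻¹' {s} ∩ X ⁻¹' {x}) * c * c⁻¹) := by
          rw [ENNReal.mul_inv_cancel_right hf (measure_ne_top _ _)]
      _ = c⁻¹ * μ (S ⁻¹' {s} ∩ (g ∘ X) ⁻¹' {g x}) * (c⁻¹ * μ (X ⁻¹' {x})) := by
          rw [h]
          ring
  · have hempty : (g ∘ X) ⁻¹' {f} ∩ X ⁻¹' {x} = ∅ :=
      Set.eq_empty_of_forall_notMem fun ω ⟨hωf, hωx⟩ => hx (by simp_all)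
    simp [hempty]

end ConditionalIndependence

/-- Equality in the data processing inequality implies that `g ∘ X` is a sufficient statistic
for `S` with respect to `X`: if `I(S;X)` is finite and `I(S;X) = I(S; g∘X)`, then `S` and `X`
are conditionally independent given the σ-algebra generated by `g ∘ X`. -/
theorem condIndep_of_mutualInfo_eq {Ω 𝒮 𝒳 ℱ : Type*} [MeasurableSpace Ω]
    [Fintype 𝒮] [MeasurableSpace 𝒮] [DiscreteMeasurableSpace 𝒮]
    [Fintype 𝒳] [MeasurableSpace 𝒳] [DiscreteMeasurableSpace 𝒳]
    [Fintype ℱ] [MeasurableSpace ℱ] [DiscreteMeasurableSpace ℱ]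
    (μ : Measure Ω) [IsProbabilityMeasure μ]
    (S : Ω → 𝒮) (X : Ω → 𝒳) (hS : Measurable S) (hX : Measurable X) (g : 𝒳 → ℱ)
    (hfin : mutualInfo μ S X ≠ ⊤)
    (heq : mutualInfo μ S X = mutualInfo μ S (g ∘ X)) :
    CondIndepGiven μ (MeasurableSpace.comap (g ∘ X) inferInstance) S X := by
  have hg : Measurable g := .of_discrete
  obtain ⟨ω⟩ := nonempty_of_isProbabilityMeasure μ
  have : Nonempty 𝒮 := ⟨S ω⟩
  have : Nonempty 𝒳 := ⟨X ω⟩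
  refine condIndepGiven_comap_of_indepFun_cond (hg.comp hX) hS hX fun f hf => ?_
  exact indepFun_cond_preimage_of_measure_mul_eq hS hX hg
    (measure_inter_preimage_mul_eq_of_mutualInfo_eq hS hX g hfin heq) hf
end

section
/- Let (Ω, μ) be a probability space, let 𝒮, 𝒳, ℱ be finite types (with discrete σ-algebras), let S : Ω → 𝒮 and X : Ω → 𝒳 be measurable, and let g : 𝒳 → ℱ. If S and X are conditionally independent given the σ-algebra generated by g∘X (i.e., S — g(X) — X form a Markov chain), then I(S;X) = I(S; g∘X). (A sufficient statistic loses no information: the embedding f = g(X) preserves all segmentation-relevant information.) -/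
open MeasureTheory ProbabilityTheory
open scoped ENNReal Classical

/-!
Write `ρ` for the joint law of `(S, X)` and `π` for the product of its marginals, both on
`𝒮 × 𝒳`. Pushing them forward along `id × g` gives the corresponding laws for `(S, g ∘ X)`, so
`I(S; g ∘ X) = KL(ρ ∘ (id × g)⁻¹ ‖ π ∘ (id × g)⁻¹)`, and the data-processing inequality holds
with equality as soon as the likelihood ratio `dρ/dπ` is a function of `(s, g x)`. On atoms,
`dρ/dπ (s, x) = P(S = s, X = x) / (P(S = s) P(X = x))`, and conditional independence given
`g ∘ X`, evaluated on the atom `{g ∘ X = g x}`, says exactly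
`P(S = s, X = x) P(g X = g x) = P(S = s, g X = g x) P(X = x)`.
-/

namespace MeasureTheory.Measure

variable {α : Type*} [MeasurableSpace α] [Countable α] {μ ν : Measure α}

lemma absolutelyContinuous_of_forall_singleton (h : ∀ a, ν {a} = 0 → μ {a} = 0) : μ ≪ ν :=
  ae_le_iff_absolutelyContinuous.mp fun _ hs =>
    ae_iff_of_countable.mpr fun a ha => ae_iff_of_countable.mp hs a (mt (h a) ha)

lemma rnDeriv_ae_eq_div_singleton [MeasurableSingletonClass α] [IsFiniteMeasure ν]
    (hμν : μ ≪ ν) : μ.rnDeriv ν =ᵐ[ν] fun a => μ {a} / ν {a} := by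
  have hμ : μ = ν.withDensity fun a => μ {a} / ν {a} := by
    refine ext_iff_singleton.mpr fun a => ?_
    rw [withDensity_apply _ (measurableSet_singleton a), lintegral_singleton]
    by_cases ha : ν {a} = 0
    · simp [ha, hμν ha]
    · exact (ENNReal.div_mul_cancel ha (measure_ne_top ν _)).symm
  nth_rewrite 1 [hμ]
  exact rnDeriv_withDensity ν (measurable_of_countable _)

end MeasureTheory.Measure

theorem InformationTheory.klDiv_map_eq_of_rnDeriv_ae_eq_comp {α β : Type*} [MeasurableSpace α]
    [mβ : MeasurableSpace β] {μ ν : Measure α} [IsFiniteMeasure μ] [IsFiniteMeasure ν]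
    {g : α → β} {f : β → ℝ≥0∞} (hμν : μ ≪ ν) (hg : Measurable g)
    (h_int : Integrable (llr μ ν) μ) (hf : Measurable f) (h : μ.rnDeriv ν =ᵐ[ν] f ∘ g) :
    InformationTheory.klDiv (μ.map g) (ν.map g) = InformationTheory.klDiv μ ν := by
  rw [InformationTheory.klDiv_map_of_ac hμν hg h_int, InformationTheory.klDiv_eq_integral_klFun,
    if_pos ⟨hμν, h_int⟩]
  have hmeas : AEStronglyMeasurable[mβ.comap g] (fun x => (μ.rnDeriv ν x).toReal) ν :=
    ⟨fun x => (f (g x)).toReal,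
      (hf.ennreal_toReal.comp (Measurable.of_comap_le le_rfl)).stronglyMeasurable,
      h.mono fun x hx => by simp [hx]⟩
  refine congrArg _ (integral_congr_ae ?_)
  filter_upwards [condExp_of_aestronglyMeasurable' hg.comap_le hmeas
    Measure.integrable_toReal_rnDeriv] with x hx
  rw [hx]

lemma klDiv_eq_informationTheory_klDiv {α : Type*} [MeasurableSpace α] (μ ν : Measure α)
    [IsProbabilityMeasure μ] [IsProbabilityMeasure ν] :
    klDiv μ ν = InformationTheory.klDiv μ ν := by
  rw [klDiv, InformationTheory.klDiv_def]
  simp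

section Laws

variable {Ω α β : Type*} [MeasurableSpace Ω] [MeasurableSpace α] [MeasurableSpace β]
  {μ : Measure Ω} {U : Ω → α} {V : Ω → β}

lemma map_pair_apply_singleton [MeasurableSingletonClass α] [MeasurableSingletonClass β]
    (hU : Measurable U) (hV : Measurable V) (a : α) (b : β) :
    μ.map (fun ω => (U ω, V ω)) {(a, b)} = μ (U ⁻¹' {a} ∩ V ⁻¹' {b}) := by
  rw [Measure.map_apply (hU.prodMk hV) (measurableSet_singleton _)]
  congr 1
  ext ω
  simp [Prod.ext_iff]

lemma prod_map_apply_singleton [IsFiniteMeasure μ] [MeasurableSingletonClass α]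
    [MeasurableSingletonClass β] (hU : Measurable U) (hV : Measurable V) (a : α) (b : β) :
    ((μ.map U).prod (μ.map V)) {(a, b)} = μ (U ⁻¹' {a}) * μ (V ⁻¹' {b}) := by
  rw [← Set.singleton_prod_singleton, Measure.prod_prod,
    Measure.map_apply hU (measurableSet_singleton a),
    Measure.map_apply hV (measurableSet_singleton b)]

lemma map_pair_absolutelyContinuous_prod_map [IsFiniteMeasure μ] [Countable α] [Countable β]
    [MeasurableSingletonClass α] [MeasurableSingletonClass β]
    (hU : Measurable U) (hV : Measurable V) :
    μ.map (fun ω => (U ω, V ω)) ≪ (μ.map U).prod (μ.map V) := by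
  refine Measure.absolutelyContinuous_of_forall_singleton fun ⟨a, b⟩ h => ?_
  rw [prod_map_apply_singleton hU hV, mul_eq_zero] at h
  rw [map_pair_apply_singleton hU hV]
  rcases h with h | h
  · exact measure_mono_null Set.inter_subset_left h
  · exact measure_mono_null Set.inter_subset_right h

lemma mutualInfo_eq_klDiv [IsProbabilityMeasure μ] (hU : Measurable U) (hV : Measurable V) :
    mutualInfo μ U V =
      InformationTheory.klDiv (μ.map fun ω => (U ω, V ω)) ((μ.map U).prod (μ.map V)) := by
  have := Measure.isProbabilityMeasure_map (μ := μ) hU.aemeasurable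
  have := Measure.isProbabilityMeasure_map (μ := μ) hV.aemeasurable
  have := Measure.isProbabilityMeasure_map (μ := μ) (hU.prodMk hV).aemeasurable
  exact klDiv_eq_informationTheory_klDiv _ _

end Laws

section Indicator

variable {Ω α : Type*} {mΩ : MeasurableSpace Ω} [MeasurableSpace α] {μ : Measure Ω}
  {U : Ω → α} {A : Set α}

lemma integrable_indicator_comp_one [IsFiniteMeasure μ] (hU : Measurable U)
    (hA : MeasurableSet A) : Integrable (fun ω => A.indicator (fun _ => (1 : ℝ)) (U ω)) μ :=
  ((integrable_const 1).indicator hA).comp_measurable hU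

lemma setIntegral_indicator_comp_one (hU : Measurable U) (hA : MeasurableSet A) (E : Set Ω) :
    ∫ ω in E, A.indicator (fun _ => (1 : ℝ)) (U ω) ∂μ = μ.real (U ⁻¹' A ∩ E) := by
  rw [← measureReal_restrict_apply (hU hA), ← integral_indicator_one (hU hA)]
  rfl

end Indicator

section Atoms

variable {Ω F : Type*} {mΩ : MeasurableSpace Ω} [mF : MeasurableSpace F]
  [MeasurableSingletonClass F] {μ : Measure Ω} [IsFiniteMeasure μ] {Y : Ω → F}

lemma condExp_comap_mul_measureReal_preimage_singleton (hY : Measurable Y) {h : Ω → ℝ}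
    (hh : Integrable h μ) (ω₀ : Ω) :
    μ[h | mF.comap Y] ω₀ * μ.real (Y ⁻¹' {Y ω₀}) = ∫ ω in Y ⁻¹' {Y ω₀}, h ω ∂μ := by
  rw [← setIntegral_condExp hY.comap_le hh ⟨_, measurableSet_singleton _, rfl⟩,
    setIntegral_congr_fun (hY (measurableSet_singleton _))
      fun ω hω => stronglyMeasurable_condExp.factorsThrough (show Y ω = Y ω₀ from hω),
    setIntegral_const, smul_eq_mul, mul_comm]

lemma CondIndepGiven.measureReal_inter_mul {𝒮 𝒳 : Type*} [MeasurableSpace 𝒮]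
    [MeasurableSpace 𝒳] {S : Ω → 𝒮} {X : Ω → 𝒳}
    (hCI : CondIndepGiven μ (mF.comap Y) S X) (hS : Measurable S) (hX : Measurable X)
    (hY : Measurable Y) {A : Set 𝒮} {B : Set 𝒳} (hA : MeasurableSet A) (hB : MeasurableSet B)
    (y : F) :
    μ.real (S ⁻¹' A ∩ X ⁻¹' B ∩ Y ⁻¹' {y}) * μ.real (Y ⁻¹' {y}) =
      μ.real (S ⁻¹' A ∩ Y ⁻¹' {y}) * μ.real (X ⁻¹' B ∩ Y ⁻¹' {y}) := by
  by_cases hy : μ (Y ⁻¹' {y}) = 0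
  · simp [measureReal_def, hy, measure_mono_null Set.inter_subset_right hy]
  -- the a.e. identity `hCI` holds at some point of the atom, where every term is a constant
  have := ae_restrict_neBot.mpr hy
  obtain ⟨ω₀, rfl, hω₀⟩ := ((ae_restrict_mem (hY (measurableSet_singleton y))).and
    (ae_restrict_of_ae (hCI A B hA hB))).exists
  have atom {f : Ω → ℝ} (hf : Integrable f μ) :=
    condExp_comap_mul_measureReal_preimage_singleton hY hf ω₀
  have eAB := atom (integrable_indicator_comp_one (hS.prodMk hX) (hA.prod hB))
  have eA := atom (integrable_indicator_comp_one hS hA)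
  have eB := atom (integrable_indicator_comp_one hX hB)
  rw [setIntegral_indicator_comp_one (hS.prodMk hX) (hA.prod hB), Set.mk_preimage_prod] at eAB
  rw [setIntegral_indicator_comp_one hS hA] at eA
  rw [setIntegral_indicator_comp_one hX hB] at eB
  have hSX : (fun ω => A.indicator (fun _ => (1 : ℝ)) (S ω) * B.indicator (fun _ => 1) (X ω)) =
      fun ω => (A ×ˢ B).indicator (fun _ => 1) (S ω, X ω) :=
    funext fun ω => Set.indicator_prod_one.symm
  rw [hSX] at hω₀
  rw [← eAB, ← eA, ← eB, hω₀]
  ring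

end Atoms

lemma CondIndepGiven.rnDeriv_map_pair_ae_eq_comp {Ω 𝒮 𝒳 ℱ : Type*} [MeasurableSpace Ω]
    [MeasurableSpace 𝒮] [Countable 𝒮] [MeasurableSingletonClass 𝒮]
    [MeasurableSpace 𝒳] [Countable 𝒳] [MeasurableSingletonClass 𝒳]
    [mℱ : MeasurableSpace ℱ] [MeasurableSingletonClass ℱ] {μ : Measure Ω} [IsFiniteMeasure μ]
    {S : Ω → 𝒮} {X : Ω → 𝒳} {g : 𝒳 → ℱ} (hCI : CondIndepGiven μ (mℱ.comap (g ∘ X)) S X)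
    (hS : Measurable S) (hX : Measurable X) (hg : Measurable g) :
    (μ.map fun ω => (S ω, X ω)).rnDeriv ((μ.map S).prod (μ.map X))
      =ᵐ[(μ.map S).prod (μ.map X)]
        (fun p => (μ.map fun ω => (S ω, (g ∘ X) ω)) {p} /
          ((μ.map S).prod (μ.map (g ∘ X))) {p}) ∘ Prod.map id g := by
  have hY : Measurable (g ∘ X) := hg.comp hX
  filter_upwards [Measure.rnDeriv_ae_eq_div_singleton
      (map_pair_absolutelyContinuous_prod_map hS hX),
    ae_iff_of_countable.mpr fun _ hp => hp] with ⟨s, x⟩ hρ hπ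
  rw [hρ, Function.comp_apply, Prod.map_apply, id, map_pair_apply_singleton hS hX,
    prod_map_apply_singleton hS hX, map_pair_apply_singleton hS hY,
    prod_map_apply_singleton hS hY]
  rw [prod_map_apply_singleton hS hX] at hπ
  have hsub : X ⁻¹' {x} ⊆ (g ∘ X) ⁻¹' {g x} := fun ω hω => congrArg g hω
  have key := hCI.measureReal_inter_mul hS hX hY (measurableSet_singleton s)
    (measurableSet_singleton x) (g x)
  rw [Set.inter_eq_left.mpr (Set.inter_subset_right.trans hsub), Set.inter_eq_left.mpr hsub,
    measureReal_def, measureReal_def, measureReal_def, measureReal_def, ← ENNReal.toReal_mul,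
    ← ENNReal.toReal_mul, ENNReal.toReal_eq_toReal_iff' (by finiteness) (by finiteness)] at key
  have hY0 : μ ((g ∘ X) ⁻¹' {g x}) ≠ 0 := fun h =>
    right_ne_zero_of_mul hπ (measure_mono_null hsub h)
  rw [ENNReal.div_eq_div_iff (mul_ne_zero (left_ne_zero_of_mul hπ) hY0) (by finiteness) hπ
    (by finiteness)]
  calc _ = μ (S ⁻¹' {s}) * (μ (S ⁻¹' {s} ∩ X ⁻¹' {x}) * μ ((g ∘ X) ⁻¹' {g x})) := by ring
    _ = _ := by rw [key]; ring

/-- A sufficient statistic loses no information: if `S` and `X` are conditionally independent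
given the σ-algebra generated by `g ∘ X` (i.e. `S — g(X) — X` form a Markov chain), then
`I(S;X) = I(S; g∘X)`. -/
theorem mutualInfo_eq_of_condIndep {Ω 𝒮 𝒳 ℱ : Type*} [MeasurableSpace Ω]
    [Fintype 𝒮] [MeasurableSpace 𝒮] [DiscreteMeasurableSpace 𝒮]
    [Fintype 𝒳] [MeasurableSpace 𝒳] [DiscreteMeasurableSpace 𝒳]
    [Fintype ℱ] [MeasurableSpace ℱ] [DiscreteMeasurableSpace ℱ]
    (μ : Measure Ω) [IsProbabilityMeasure μ]
    (S : Ω → 𝒮) (X : Ω → 𝒳) (hS : Measurable S) (hX : Measurable X) (g : 𝒳 → ℱ)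
    (hCI : CondIndepGiven μ (MeasurableSpace.comap (g ∘ X) inferInstance) S X) :
    mutualInfo μ S X = mutualInfo μ S (g ∘ X) := by
  have hg : Measurable g := .of_discrete
  have hY : Measurable (g ∘ X) := hg.comp hX
  have hidg : Measurable (Prod.map id g : 𝒮 × 𝒳 → 𝒮 × ℱ) := measurable_id.prodMap hg
  have hjoint : μ.map (fun ω => (S ω, (g ∘ X) ω))
      = (μ.map fun ω => (S ω, X ω)).map (Prod.map id g) := by
    rw [Measure.map_map hidg (hS.prodMk hX)]
    rfl
  have hmarg : (μ.map S).prod (μ.map (g ∘ X))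
      = ((μ.map S).prod (μ.map X)).map (Prod.map id g) := by
    rw [← Measure.map_map hg hX, ← Measure.map_prod_map _ _ measurable_id hg, Measure.map_id]
  rw [mutualInfo_eq_klDiv hS hX, mutualInfo_eq_klDiv hS hY, hjoint, hmarg,
    InformationTheory.klDiv_map_eq_of_rnDeriv_ae_eq_comp
      (map_pair_absolutelyContinuous_prod_map hS hX) hidg .of_finite
      (measurable_of_countable _) (hCI.rnDeriv_map_pair_ae_eq_comp hS hX hg)]
end
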